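/- arXiv:math/0404532 — 4 statements merged into one kernel-verified Lean document; each statement's English description precedes it below -/
import Mathlib

section
/- If ψ : H → GL(2,ℝ) is a group homomorphism from the three-dimensional discrete Heisenberg group H, and f is the generator of the center of H (so f = [g,h] for generators g,h), then ψ(f) = I or ψ(f) = −I. -/
open scoped commutatorElement

lemma comm_of_commute_nonscalar (A B C : Matrix (Fin 2) (Fin 2) ℝ)
    (hAB : A * B = B * A) (hAC : A * C = C * A)
    (hns : A 0 1 ≠ 0 ∨ A 1 0 ≠ 0 ∨ A 0 0 ≠ A 1 1) :
    B * C = C * B := by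
  have e1 := congrFun (congrFun hAB 0 : _) 1
  have e2 := congrFun (congrFun hAB 1 : _) 0
  have e3 := congrFun (congrFun hAB 0 : _) 0
  simp [Matrix.mul_apply, Fin.sum_univ_two] at e1 e2 e3
  have f1 := congrFun (congrFun hAC 0 : _) 1
  have f2 := congrFun (congrFun hAC 1 : _) 0
  have f3 := congrFun (congrFun hAC 0 : _) 0
  simp [Matrix.mul_apply, Fin.sum_univ_two] at f1 f2 f3
  ext i j
  fin_cases i <;> fin_cases j <;> simp [Matrix.mul_apply, Fin.sum_univ_two] <;>
      rcases hns with h|h|h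
  -- (0,0)
  · exact mul_left_cancel₀ (mul_ne_zero h h)
      (by linear_combination A 0 1 * (B 0 1 * f3 - C 0 1 * e3))
  · exact mul_left_cancel₀ (mul_ne_zero h h)
      (by linear_combination A 1 0 * (B 1 0 * f3 - C 1 0 * e3))
  · have ht := sub_ne_zero_of_ne h
    exact mul_left_cancel₀ (mul_ne_zero ht ht)
      (by linear_combination (C 1 0 * (A 0 0 - A 1 1)) * e1 - (B 1 0 * (A 0 0 - A 1 1)) * f1
            + (A 0 1 * (C 0 0 - C 1 1)) * e2 - (A 0 1 * (B 0 0 - B 1 1)) * f2)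
  -- (0,1)
  · exact mul_left_cancel₀ (mul_ne_zero h h)
      (by linear_combination A 0 1 * (B 0 1 * f1 - C 0 1 * e1))
  · exact mul_left_cancel₀ (mul_ne_zero h h)
      (by linear_combination A 1 0 * (C 0 1 * e2 - B 0 1 * f2)
            + (A 0 0 - A 1 1) * (C 1 0 * e3 - B 1 0 * f3))
  · exact mul_left_cancel₀ (sub_ne_zero_of_ne h)
      (by linear_combination (B 0 0 - B 1 1) * f1 - (C 0 0 - C 1 1) * e1)
  -- (1,0)
  · exact mul_left_cancel₀ (mul_ne_zero h h)
      (by linear_combination (A 0 0 - A 1 1) * (C 0 1 * e3 - B 0 1 * f3)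
            + A 0 1 * (C 1 0 * e1 - B 1 0 * f1))
  · exact mul_left_cancel₀ (mul_ne_zero h h)
      (by linear_combination A 1 0 * (B 1 0 * f2 - C 1 0 * e2))
  · exact mul_left_cancel₀ (sub_ne_zero_of_ne h)
      (by linear_combination (B 0 0 - B 1 1) * f2 - (C 0 0 - C 1 1) * e2)
  -- (1,1)
  · exact mul_left_cancel₀ (mul_ne_zero h h)
      (by linear_combination A 0 1 * (C 0 1 * e3 - B 0 1 * f3))
  · exact mul_left_cancel₀ (mul_ne_zero h h)
      (by linear_combination A 1 0 * (C 1 0 * e3 - B 1 0 * f3))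
  · have ht := sub_ne_zero_of_ne h
    exact mul_left_cancel₀ (mul_ne_zero ht ht)
      (by linear_combination (B 1 0 * (A 0 0 - A 1 1)) * f1 - (C 1 0 * (A 0 0 - A 1 1)) * e1
            + (A 0 1 * (B 0 0 - B 1 1)) * f2 - (A 0 1 * (C 0 0 - C 1 1)) * e2)

/-- If `ψ : H → GL(2,ℝ)` is a homomorphism from the discrete Heisenberg group `H`
(generated by `g, h` with `f = [g,h]` generating the center and of infinite order),
then `ψ(f) = I` or `ψ(f) = -I`. -/
theorem heisenberg_to_GL2_center_pm_one {H : Type*} [Group H] (g h f : H)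
    (hgen : Subgroup.closure ({g, h} : Set H) = ⊤)
    (hf : f = ⁅g, h⁆)
    (hcenter : Subgroup.center H = Subgroup.zpowers f)
    (hord : ¬ IsOfFinOrder f)
    (ψ : H →* Matrix.GeneralLinearGroup (Fin 2) ℝ) :
    (ψ f : Matrix (Fin 2) (Fin 2) ℝ) = 1 ∨ (ψ f : Matrix (Fin 2) (Fin 2) ℝ) = -1 := by
  have hmem : f ∈ Subgroup.center H := hcenter ▸ Subgroup.mem_zpowers f
  have hcomm := Subgroup.mem_center_iff.mp hmem
  have h1 : ψ f * ψ g = ψ g * ψ f := by rw [← map_mul, ← map_mul, hcomm g]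
  have h2 : ψ f * ψ h = ψ h * ψ f := by rw [← map_mul, ← map_mul, hcomm h]
  by_cases hBC : ψ g * ψ h = ψ h * ψ g
  · left
    have : ψ f = 1 := by
      rw [hf, map_commutatorElement, commutatorElement_eq_one_iff_mul_comm.mpr hBC]
    rw [this, Units.val_one]
  · have hAB : (ψ f : Matrix (Fin 2) (Fin 2) ℝ) * (ψ g : Matrix (Fin 2) (Fin 2) ℝ)
        = (ψ g : Matrix (Fin 2) (Fin 2) ℝ) * (ψ f : Matrix (Fin 2) (Fin 2) ℝ) := by
      exact_mod_cast congrArg Units.val h1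
    have hAC : (ψ f : Matrix (Fin 2) (Fin 2) ℝ) * (ψ h : Matrix (Fin 2) (Fin 2) ℝ)
        = (ψ h : Matrix (Fin 2) (Fin 2) ℝ) * (ψ f : Matrix (Fin 2) (Fin 2) ℝ) := by
      exact_mod_cast congrArg Units.val h2
    have hsc : ¬((ψ f : Matrix (Fin 2) (Fin 2) ℝ) 0 1 ≠ 0 ∨
        (ψ f : Matrix (Fin 2) (Fin 2) ℝ) 1 0 ≠ 0 ∨
        (ψ f : Matrix (Fin 2) (Fin 2) ℝ) 0 0 ≠ (ψ f : Matrix (Fin 2) (Fin 2) ℝ) 1 1) := by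
      intro hns
      exact hBC (Units.ext (comm_of_commute_nonscalar _ _ _ hAB hAC hns))
    push_neg at hsc
    obtain ⟨hz1, hz2, hz3⟩ := hsc
    have hdet : ((ψ f : Matrix (Fin 2) (Fin 2) ℝ)).det = 1 := by
      have hc : ψ f = ⁅ψ g, ψ h⁆ := by rw [hf, map_commutatorElement]
      have : Matrix.GeneralLinearGroup.det (ψ f) = 1 := by
        rw [hc, map_commutatorElement]
        exact commutatorElement_eq_one_iff_mul_comm.mpr (mul_comm _ _)
      have := congrArg Units.val this
      rwa [Matrix.GeneralLinearGroup.val_det_apply, Units.val_one] at this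
    rw [Matrix.det_fin_two, hz1, hz2, hz3] at hdet
    have : (ψ f : Matrix (Fin 2) (Fin 2) ℝ) 1 1 = 1 ∨ (ψ f : Matrix (Fin 2) (Fin 2) ℝ) 1 1 = -1 := by
      rcases mul_self_eq_one_iff.mp (by linarith [hdet] : (ψ f : Matrix (Fin 2) (Fin 2) ℝ) 1 1 * (ψ f : Matrix (Fin 2) (Fin 2) ℝ) 1 1 = 1) with h'|h'
      · exact Or.inl h'
      · exact Or.inr h'
    rcases this with h'|h'
    · left
      ext i j
      fin_cases i <;> fin_cases j <;>
        simp [hz1, hz2, hz3, h', Matrix.one_apply]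
    · right
      ext i j
      fin_cases i <;> fin_cases j <;>
        simp [hz1, hz2, hz3, h', Matrix.one_apply]
end

section
/- Let A be the matrix [[2,1],[1,1]] acting on the torus T² = ℝ²/ℤ², and let T be the translation T(x) = x + w where w ≠ 0 is parallel to the unstable eigenvector of A. In the group generated by A and T, the element T is distorted: T^{tr(Aⁿ)} can be written as a word of length at most 4n+2 in the generators, and tr(Aⁿ) grows exponentially in n. -/
/-!
Since `w` is an eigenvector of `A` for `λ`, conjugating `T = T_w` by `Aᵏ` gives `T_{λᵏ w}` for
every `k ∈ ℤ`, so `T^(λⁿ + λ⁻ⁿ) = (Aⁿ T A⁻ⁿ)(A⁻ⁿ T Aⁿ)`, a word of length `4n + 2`. The exponent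
is the integer `tr Aⁿ` (Cayley–Hamilton, with `det A = 1` and `tr A = 3 = λ + λ⁻¹`), which grows
like `λⁿ`; hence the word length of `T^(tr Aⁿ)` divided by `tr Aⁿ` tends to `0`. Finally `T` has
infinite order: `Tᵏ = 1` would put `k w` in `ℤ²`, forcing the eigenvalue `λ = φ²` to be rational.
-/

/-- The word length of `g` with respect to a generating set `S`. -/
noncomputable def wordLength {G : Type*} [Group G] (S : Set G) (g : G) : ℕ :=
  sInf {n : ℕ | ∃ w : Fin n → G, (∀ i, w i ∈ S ∨ (w i)⁻¹ ∈ S) ∧ (List.ofFn w).prod = g}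

/-- `f` is a distortion element with respect to the generating set `S`. -/
def IsDistortionElement {G : Type*} [Group G] (S : Set G) (f : G) : Prop :=
  ¬ IsOfFinOrder f ∧
    Filter.liminf (fun n : ℕ => (wordLength S (f ^ n) : ℝ) / n) Filter.atTop = 0

/-- The torus `T² = ℝ²/ℤ²`. -/
abbrev Torus2 := AddCircle (1 : ℝ) × AddCircle (1 : ℝ)

/-- The automorphism of `T²` induced by the matrix `[[2,1],[1,1]]`. -/
noncomputable def hypAuto : Equiv.Perm Torus2 where
  toFun p := ((2 : ℤ) • p.1 + p.2, p.1 + p.2)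
  invFun p := (p.1 - p.2, -p.1 + (2 : ℤ) • p.2)
  left_inv := by rintro ⟨x, y⟩; simp only [Prod.mk.injEq]; constructor <;> abel
  right_inv := by rintro ⟨x, y⟩; simp only [Prod.mk.injEq]; constructor <;> abel

/-- Translation of `T²` by the vector `w ∈ ℝ²`. -/
noncomputable def torusTranslation (w : ℝ × ℝ) : Equiv.Perm Torus2 :=
  Equiv.addLeft (((w.1 : AddCircle (1 : ℝ)), (w.2 : AddCircle (1 : ℝ))) : Torus2)

open Filter Topology Real goldenRatio

theorem zpow_mul_mul_inv_zpow_of_conj {G K : Type*} [Group G] [DivisionRing K] (t : K → G)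
    {g : G} {lam : K} (hlam : lam ≠ 0) (hconj : ∀ c, g * t c * g⁻¹ = t (lam * c)) (n : ℤ)
    (c : K) : g ^ n * t c * (g ^ n)⁻¹ = t (lam ^ n * c) := by
  have hconj_inv : ∀ c, g⁻¹ * t c * g = t (lam⁻¹ * c) := fun c => by
    have h := hconj (lam⁻¹ * c)
    rw [mul_inv_cancel_left₀ hlam] at h
    rw [← h]
    group
  induction n using Int.induction_on generalizing c with
  | zero => simp
  | succ i ih =>
    rw [zpow_add_one, zpow_add_one₀ hlam, mul_assoc _ lam, ← ih, ← hconj]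
    group
  | pred i ih =>
    rw [zpow_sub_one, zpow_sub_one₀ hlam, mul_assoc _ lam⁻¹, ← ih, ← hconj_inv]
    group

theorem wordLength_prod_le {G : Type*} [Group G] (S : Set G) (L : List G)
    (hL : ∀ x ∈ L, x ∈ S ∨ x⁻¹ ∈ S) : wordLength S L.prod ≤ L.length :=
  Nat.sInf_le ⟨L.get, fun i => hL _ (L.get_mem i), by rw [List.ofFn_get]⟩

theorem wordLength_conj_mul_conj_le {G : Type*} [Group G] {S : Set G} {a t : G} (ha : a ∈ S)
    (ht : t ∈ S) (n : ℕ) :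
    wordLength S (a ^ n * t * (a ^ n)⁻¹ * ((a ^ n)⁻¹ * t * a ^ n)) ≤ 4 * n + 2 := by
  let L := List.replicate n a ++ [t] ++ List.replicate (2 * n) a⁻¹ ++ [t] ++ List.replicate n a
  have hprod : L.prod = a ^ n * t * (a ^ n)⁻¹ * ((a ^ n)⁻¹ * t * a ^ n) := by
    simp only [L, List.prod_append, List.prod_replicate, List.prod_singleton, inv_pow, two_mul,
      pow_add]
    group
  have hlen : L.length = 4 * n + 2 := by
    simp only [L, List.length_append, List.length_replicate, List.length_singleton]
    ring
  rw [← hprod, ← hlen]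
  refine wordLength_prod_le S L fun x hx => ?_
  simp only [L, List.mem_append, List.mem_replicate, List.mem_singleton] at hx
  rcases hx with (((⟨-, rfl⟩ | rfl) | ⟨-, rfl⟩) | rfl) | ⟨-, rfl⟩ <;> simp [ha, ht]

theorem tendsto_linear_div_pow_atTop_nhds_zero {r : ℝ} (hr : 1 < r) (a b : ℝ) :
    Tendsto (fun k : ℕ => (a * k + b) / r ^ k) atTop (𝓝 0) := by
  have h := ((tendsto_pow_const_div_const_pow_of_one_lt 1 hr).const_mul a).add
    ((tendsto_pow_const_div_const_pow_of_one_lt 0 hr).const_mul b)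
  rw [mul_zero, mul_zero, add_zero] at h
  convert h using 2 with k
  ring

theorem Filter.liminf_eq_zero_of_tendsto_comp {ι κ : Type*} {l : Filter ι} {l' : Filter κ}
    [l'.NeBot] {u : ι → ℝ} (hu : ∀ i, 0 ≤ u i) {N : κ → ι} (hN : Tendsto N l' l)
    (h : Tendsto (u ∘ N) l' (𝓝 0)) : liminf u l = 0 := by
  have hfreq : ∀ ε > 0, ∃ᶠ i in l, u i ≤ ε := fun ε hε =>
    hN.frequently (h.eventually (ge_mem_nhds hε)).frequently
  refine le_antisymm (le_of_forall_pos_le_add fun ε hε => ?_) ?_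
  · rw [zero_add]
    exact liminf_le_of_frequently_le (hfreq ε hε) (isBoundedUnder_of ⟨0, hu⟩)
  · exact le_liminf_of_le (IsCoboundedUnder.of_frequently_le (hfreq 1 one_pos))
      (Eventually.of_forall hu)

theorem isDistortionElement_of_wordLength_pow_le {G : Type*} [Group G] {S : Set G} {f : G}
    (hf : ¬IsOfFinOrder f) {r : ℝ} (hr : 1 < r) {N : ℕ → ℕ} (hN : ∀ k, r ^ k ≤ N k) (a b : ℕ)
    (hlen : ∀ k, wordLength S (f ^ N k) ≤ a * k + b) : IsDistortionElement S f := by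
  have hN_tendsto : Tendsto N atTop atTop := tendsto_natCast_atTop_iff.mp <|
    tendsto_atTop_mono hN (tendsto_pow_atTop_atTop_of_one_lt hr)
  have hbound : ∀ k, (wordLength S (f ^ N k) : ℝ) / N k ≤ (a * k + b) / r ^ k := fun k =>
    div_le_div₀ (by positivity) (by exact_mod_cast hlen k) (by positivity) (hN k)
  refine ⟨hf, liminf_eq_zero_of_tendsto_comp (u := fun n : ℕ => (wordLength S (f ^ n) : ℝ) / n)
    (fun n => by positivity) hN_tendsto ?_⟩
  exact squeeze_zero (fun k => div_nonneg (Nat.cast_nonneg _) (Nat.cast_nonneg _)) hbound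
    (tendsto_linear_div_pow_atTop_nhds_zero hr a b)

theorem Matrix.sq_eq_trace_smul_sub_det_smul_fin_two {R : Type*} [CommRing R]
    (M : Matrix (Fin 2) (Fin 2) R) : M ^ 2 = M.trace • M - M.det • 1 := by
  ext i j
  simp only [sq, mul_apply, Fin.sum_univ_two, sub_apply, smul_apply, one_apply, trace_fin_two,
    det_fin_two, smul_eq_mul]
  fin_cases i <;> fin_cases j <;> simp <;> ring

theorem Matrix.trace_pow_fin_two_of_det_eq_one {K : Type*} [Field K]
    (M : Matrix (Fin 2) (Fin 2) ℤ) (hdet : M.det = 1) {lam : K} (hlam : lam ≠ 0)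
    (htr : (M.trace : K) = lam + lam⁻¹) (n : ℕ) :
    ((M ^ n).trace : K) = lam ^ n + lam⁻¹ ^ n := by
  induction n using Nat.twoStepInduction with
  | zero => norm_num
  | one => simpa using htr
  | more n ih₀ ih₁ =>
    have hrec : M ^ (n + 2) = M.trace • M ^ (n + 1) - M ^ n := by
      rw [pow_add, M.sq_eq_trace_smul_sub_det_smul_fin_two, hdet, one_smul, Matrix.mul_sub,
        Matrix.mul_smul, mul_one, ← pow_succ]
    rw [hrec, trace_sub, trace_smul, smul_eq_mul]
    push_cast
    rw [ih₀, ih₁, htr]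
    linear_combination (lam ^ n + lam⁻¹ ^ n) * mul_inv_cancel₀ hlam

theorem goldenRatio_sq_eq : φ ^ 2 = (3 + √5) / 2 := by
  rw [goldenRatio_sq, goldenRatio]
  ring

theorem goldenRatio_sq_add_inv : φ ^ 2 + (φ ^ 2)⁻¹ = 3 := by
  rw [← inv_pow, inv_goldenRatio, neg_sq, goldenRatio_sq, goldenConj_sq]
  linear_combination goldenRatio_add_goldenConj

theorem irrational_goldenRatio_sq : Irrational (φ ^ 2) := by
  simpa [goldenRatio_sq] using goldenRatio_irrational.add_natCast 1

theorem torusTranslation_mul (u v : ℝ × ℝ) :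
    torusTranslation u * torusTranslation v = torusTranslation (u + v) := by
  simp [torusTranslation, ← Equiv.addLeft_add]

theorem torusTranslation_zpow (v : ℝ × ℝ) (k : ℤ) :
    torusTranslation v ^ k = torusTranslation ((k : ℝ) • v) := by
  simp [torusTranslation, Equiv.zsmul_addLeft]

theorem torusTranslation_eq_one_iff (v : ℝ × ℝ) :
    torusTranslation v = 1 ↔ (∃ m : ℤ, (m : ℝ) = v.1) ∧ ∃ n : ℤ, (n : ℝ) = v.2 := by
  simp [torusTranslation, Equiv.ext_iff, AddSubgroup.mem_zmultiples_iff]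

theorem hypAuto_mul_torusTranslation_mul_inv (v : ℝ × ℝ) :
    hypAuto * torusTranslation v * hypAuto⁻¹ = torusTranslation (2 * v.1 + v.2, v.1 + v.2) := by
  rw [mul_inv_eq_iff_eq_mul]
  ext p
  · simp [torusTranslation, hypAuto, two_zsmul, two_mul]
    abel
  · simp [torusTranslation, hypAuto]
    abel

theorem not_isOfFinOrder_torusTranslation {w : ℝ × ℝ} (hw : w ≠ 0) {lam : ℝ}
    (hlam : Irrational lam) (hweig : w.1 + w.2 = lam * w.2) :
    ¬IsOfFinOrder (torusTranslation w) := by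
  intro hfin
  obtain ⟨k, hk, hk1⟩ := isOfFinOrder_iff_pow_eq_one.mp hfin
  rw [← zpow_natCast, torusTranslation_zpow, torusTranslation_eq_one_iff] at hk1
  obtain ⟨⟨m, hm⟩, ⟨p, hp⟩⟩ := hk1
  simp only [Prod.smul_fst, Prod.smul_snd, smul_eq_mul, Int.cast_natCast] at hm hp
  have hw2 : w.2 ≠ 0 := fun h => hw (Prod.ext (by simpa [h] using hweig) h)
  have hp0 : p ≠ 0 := Int.cast_ne_zero.mp (hp ▸ mul_ne_zero (by positivity) hw2 : (p : ℝ) ≠ 0)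
  -- `k w` is an integer eigenvector, so `λ = (m + p) / p`.
  refine (hlam.mul_intCast hp0).ne_int (m + p) ?_
  push_cast
  rw [hm, hp]
  linear_combination (k : ℝ) * hweig.symm

theorem hypAuto_conj_torusTranslation_eigenvector {w : ℝ × ℝ} {lam : ℝ}
    (hweig : 2 * w.1 + w.2 = lam * w.1 ∧ w.1 + w.2 = lam * w.2) (c : ℝ) :
    hypAuto * torusTranslation (c • w) * hypAuto⁻¹ = torusTranslation ((lam * c) • w) := by
  rw [hypAuto_mul_torusTranslation_mul_inv]
  congr 1
  ext
  · simp only [Prod.smul_fst, Prod.smul_snd, smul_eq_mul]; linear_combination c * hweig.1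
  · simp only [Prod.smul_fst, Prod.smul_snd, smul_eq_mul]; linear_combination c * hweig.2

theorem torusTranslation_pow_add_inv_pow_smul {w : ℝ × ℝ} {lam : ℝ} (hlam : lam ≠ 0)
    (hweig : 2 * w.1 + w.2 = lam * w.1 ∧ w.1 + w.2 = lam * w.2) (n : ℕ) :
    torusTranslation ((lam ^ n + lam⁻¹ ^ n) • w) =
      hypAuto ^ n * torusTranslation w * (hypAuto ^ n)⁻¹ *
        ((hypAuto ^ n)⁻¹ * torusTranslation w * hypAuto ^ n) := by
  have hconj := zpow_mul_mul_inv_zpow_of_conj (fun c => torusTranslation (c • w)) hlam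
    (hypAuto_conj_torusTranslation_eigenvector hweig)
  have hpos := hconj n 1
  have hneg := hconj (-n) 1
  simp only [one_smul, mul_one, zpow_natCast, zpow_neg, inv_inv] at hpos hneg
  rw [hpos, hneg, torusTranslation_mul, add_smul, inv_pow]

/-- Mess's example: for `A = [[2,1],[1,1]]` acting on `T²` and `T` the translation by a
nonzero vector `w` parallel to the unstable eigenvector of `A` (eigenvalue
`λ = (3+√5)/2`), the trace of `Aⁿ` equals `λⁿ + λ⁻ⁿ` (growing exponentially),
`T^{tr(Aⁿ)}` is a word of length at most `4n+2` in `{A, T}`, and `T` is a distortion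
element of the group generated by `A` and `T`. -/
theorem translation_distorted_in_group_with_hyperbolic_auto
    (w : ℝ × ℝ) (hw0 : w ≠ 0)
    (lam : ℝ) (hlam : lam = (3 + Real.sqrt 5) / 2)
    (hweig : 2 * w.1 + w.2 = lam * w.1 ∧ w.1 + w.2 = lam * w.2)
    (M : Matrix (Fin 2) (Fin 2) ℤ) (hM : M = !![2, 1; 1, 1]) :
    (∀ n : ℕ, ((Matrix.trace (M ^ n) : ℤ) : ℝ) = lam ^ n + lam⁻¹ ^ n) ∧
    (∀ n : ℕ,
      wordLength ({hypAuto, torusTranslation w} : Set (Equiv.Perm Torus2))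
        (torusTranslation w ^ (Matrix.trace (M ^ n))) ≤ 4 * n + 2) ∧
    IsDistortionElement ({hypAuto, torusTranslation w} : Set (Equiv.Perm Torus2))
      (torusTranslation w) := by
  rw [← goldenRatio_sq_eq] at hlam
  subst hlam
  have hgt : 1 < φ ^ 2 := one_lt_pow₀ one_lt_goldenRatio two_ne_zero
  have hne : φ ^ 2 ≠ 0 := by positivity
  have htrace : ∀ n : ℕ, ((M ^ n).trace : ℝ) = (φ ^ 2) ^ n + (φ ^ 2)⁻¹ ^ n :=
    M.trace_pow_fin_two_of_det_eq_one (by simp [hM, Matrix.det_fin_two]) hne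
      (by rw [goldenRatio_sq_add_inv, hM, Matrix.trace_fin_two]; norm_num)
  have hlen : ∀ n : ℕ, wordLength {hypAuto, torusTranslation w}
      (torusTranslation w ^ (M ^ n).trace) ≤ 4 * n + 2 := fun n => by
    rw [torusTranslation_zpow, htrace, torusTranslation_pow_add_inv_pow_smul hne hweig]
    exact wordLength_conj_mul_conj_le (by simp) (by simp) n
  obtain ⟨N, hN⟩ : ∃ N : ℕ → ℕ, ∀ n, (N n : ℤ) = (M ^ n).trace :=
    ⟨fun n => (M ^ n).trace.toNat, fun n => Int.toNat_of_nonneg <| by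
      exact_mod_cast (htrace n ▸ by positivity : (0 : ℝ) ≤ (M ^ n).trace)⟩
  refine ⟨htrace, hlen, isDistortionElement_of_wordLength_pow_le
    (not_isOfFinOrder_torusTranslation hw0 irrational_goldenRatio_sq hweig.2) hgt
    (N := N) (fun n => ?_) 4 2 (fun n => ?_)⟩
  · rw [← Int.cast_natCast, hN, htrace]
    exact le_add_of_nonneg_right (by positivity)
  · rw [← zpow_natCast, hN]
    exact hlen n
end

section
/- Let G be a finitely generated almost simple group which contains a distortion element, and let H be a normal subgroup of G. Then every group homomorphism ψ : H → ℝ (to the additive reals) is trivial. -/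
/-- A group is almost simple if every normal subgroup is finite or of finite index. -/
def AlmostSimple (G : Type*) [Group G] : Prop :=
  ∀ N : Subgroup G, N.Normal → (N : Set G).Finite ∨ N.FiniteIndex

open Filter
open scoped Pointwise

theorem MonoidHom.eq_one_of_finiteIndex_ker {H A : Type*} [Group H] [Monoid A]
    [IsMulTorsionFree A] (φ : H →* A) [φ.ker.FiniteIndex] (h : H) : φ h = 1 :=
  (pow_eq_one_iff_left (Subgroup.FiniteIndex.index_ne_zero (H := φ.ker))).mp <| by
    rw [← map_pow]; exact φ.ker.pow_index_mem h

theorem Subgroup.finiteIndex_of_map_subtype {G : Type*} [Group G] {H : Subgroup G}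
    {K : Subgroup H} [(K.map H.subtype).FiniteIndex] : K.FiniteIndex :=
  ⟨left_ne_zero_of_mul (index_map_subtype K ▸ FiniteIndex.index_ne_zero)⟩

section WordLength

variable {G : Type*} [Group G] {S : Set G}

theorem wordLength_le_length {l : List G} (hl : ∀ x ∈ l, x ∈ S ∪ S⁻¹) :
    wordLength S l.prod ≤ l.length :=
  Nat.sInf_le ⟨l.get, fun i => hl _ (l.get_mem i), by rw [List.ofFn_get]⟩

theorem exists_list_length_eq_wordLength (hS : Subgroup.closure S = ⊤) (g : G) :
    ∃ l : List G, (∀ x ∈ l, x ∈ S ∪ S⁻¹) ∧ l.prod = g ∧ l.length = wordLength S g := by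
  have hne : {n : ℕ | ∃ w : Fin n → G, (∀ i, w i ∈ S ∨ (w i)⁻¹ ∈ S) ∧
      (List.ofFn w).prod = g}.Nonempty := by
    have hg : g ∈ Submonoid.closure (S ∪ S⁻¹) := by
      rw [← Subgroup.closure_toSubmonoid, hS]; trivial
    obtain ⟨l, hl, rfl⟩ := Submonoid.exists_list_of_mem_closure hg
    exact ⟨l.length, l.get, fun i => hl _ (l.get_mem i), by rw [List.ofFn_get]⟩
  obtain ⟨w, hw, hprod⟩ := Nat.sInf_mem hne
  exact ⟨List.ofFn w, by simpa [List.mem_ofFn] using hw, hprod, List.length_ofFn⟩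

theorem wordLength_mul_le (hS : Subgroup.closure S = ⊤) (a b : G) :
    wordLength S (a * b) ≤ wordLength S a + wordLength S b := by
  obtain ⟨la, hla, rfl, ha⟩ := exists_list_length_eq_wordLength hS a
  obtain ⟨lb, hlb, rfl, hb⟩ := exists_list_length_eq_wordLength hS b
  rw [← ha, ← hb, ← List.length_append, ← List.prod_append]
  exact wordLength_le_length fun x hx => (List.mem_append.mp hx).elim (hla x) (hlb x)

theorem wordLength_pow_le (hS : Subgroup.closure S = ⊤) (a : G) (n : ℕ) :
    wordLength S (a ^ n) ≤ n * wordLength S a := by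
  induction n with
  | zero => simpa using wordLength_le_length (S := S) (l := []) (by simp)
  | succ n ih =>
    calc wordLength S (a ^ (n + 1)) ≤ wordLength S (a ^ n) + wordLength S a :=
          pow_succ a n ▸ wordLength_mul_le hS _ _
      _ ≤ (n + 1) * wordLength S a := by rw [add_mul, one_mul]; omega

theorem le_mul_wordLength_add_of_le_add (hS : Subgroup.closure S = ⊤) {f : G → ℝ} {B : ℝ}
    (hf : ∀ s ∈ S ∪ S⁻¹, ∀ x, f (s * x) ≤ f x + B) (g : G) :
    f g ≤ B * wordLength S g + f 1 := by
  obtain ⟨l, hl, rfl, hlen⟩ := exists_list_length_eq_wordLength hS g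
  rw [← hlen]
  clear hlen
  induction l with
  | nil => simp
  | cons s l ih =>
    have hstep := hf s (hl s List.mem_cons_self) l.prod
    rw [List.prod_cons, List.length_cons, Nat.cast_succ]
    linarith [ih fun x hx => hl x (List.mem_cons_of_mem s hx)]

end WordLength

section Transversal

variable {G : Type*} [Group G] (H : Subgroup G)

noncomputable def cosetResidue (x : G) : H :=
  ⟨(x : G ⧸ H).out⁻¹ * x, QuotientGroup.eq.mp (QuotientGroup.out_eq' _)⟩

theorem cosetResidue_of_mem (h : H) : cosetResidue H h = cosetResidue H 1 * h := by
  have hq : ((h : G) : G ⧸ H) = ((1 : G) : G ⧸ H) :=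
    QuotientGroup.eq.mpr (by simp)
  ext
  simp [cosetResidue, hq]

theorem cosetResidue_mul_mul_inv_out (s x : G) :
    cosetResidue H (s * (x : G ⧸ H).out) * (cosetResidue H (x : G ⧸ H).out)⁻¹ =
      cosetResidue H (s * x) * (cosetResidue H x)⁻¹ := by
  have hq : ((s * (x : G ⧸ H).out : G) : G ⧸ H) = ((s * x : G) : G ⧸ H) :=
    QuotientGroup.eq.mpr <| by
      rw [mul_inv_rev, mul_assoc, inv_mul_cancel_left]; exact (cosetResidue H x).2
  ext
  simp only [cosetResidue, hq, QuotientGroup.out_eq', Subgroup.coe_mul, InvMemClass.coe_inv]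
  group

end Transversal

section Distortion

variable {G : Type*} [Group G] {S : Set G} {u : G}

/-- Schreier's argument: along a word, `cosetResidue H` changes by the cocycle
`cosetResidue H (s * x) * (cosetResidue H x)⁻¹`, which depends only on the letter `s` and the
coset of `x`, hence takes finitely many values. -/
theorem exists_abs_toAdd_le_mul_wordLength_add (hSfin : S.Finite) (hS : Subgroup.closure S = ⊤)
    (H : Subgroup G) [H.FiniteIndex] (φ : H →* Multiplicative ℝ) :
    ∃ M C : ℝ, ∀ h : H, |(φ h).toAdd| ≤ M * wordLength S h + C := by
  set f : G → ℝ := fun x => |(φ (cosetResidue H x)).toAdd|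
  set cocycle : G → G → ℝ := fun s x =>
    |(φ (cosetResidue H (s * x) * (cosetResidue H x)⁻¹)).toAdd|
  have : Finite ↥(S ∪ S⁻¹) := (hSfin.union hSfin.inv).to_subtype
  obtain ⟨B, hB⟩ :=
    (Set.finite_range fun p : ↥(S ∪ S⁻¹) × (G ⧸ H) => cocycle p.1 p.2.out).bddAbove
  have hstep : ∀ s ∈ S ∪ S⁻¹, ∀ x, f (s * x) ≤ f x + B := by
    intro s hs x
    have hcocycle : cocycle s x ≤ B := by
      have := hB ⟨(⟨s, hs⟩, (x : G ⧸ H)), rfl⟩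
      simpa only [cocycle, cosetResidue_mul_mul_inv_out] using this
    calc f (s * x)
        = |(φ (cosetResidue H (s * x) * (cosetResidue H x)⁻¹)).toAdd +
            (φ (cosetResidue H x)).toAdd| := by
          rw [← toAdd_mul, ← map_mul, inv_mul_cancel_right]
      _ ≤ cocycle s x + f x := abs_add_le _ _
      _ ≤ f x + B := by linarith
  refine ⟨B, 2 * f 1, fun h => ?_⟩
  have hf := le_mul_wordLength_add_of_le_add hS hstep h
  calc |(φ h).toAdd| = |(φ (cosetResidue H h)).toAdd - (φ (cosetResidue H 1)).toAdd| := by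
        rw [cosetResidue_of_mem, map_mul, toAdd_mul, add_sub_cancel_left]
    _ ≤ f h + f 1 := abs_sub _ _
    _ ≤ B * wordLength S h + 2 * f 1 := by linarith

theorem IsDistortionElement.frequently_wordLength_pow_lt (hS : Subgroup.closure S = ⊤)
    (hu : IsDistortionElement S u) {ε : ℝ} (hε : 0 < ε) :
    ∃ᶠ n : ℕ in atTop, (wordLength S (u ^ n) : ℝ) < ε * n := by
  by_contra h
  have hev : ∀ᶠ n : ℕ in atTop, ε ≤ (wordLength S (u ^ n) : ℝ) / n := by
    filter_upwards [not_frequently.mp h, eventually_gt_atTop 0] with n hn hpos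
    rw [le_div_iff₀ (by exact_mod_cast hpos)]
    exact not_lt.mp hn
  have hbdd : ∀ n : ℕ, (wordLength S (u ^ n) : ℝ) / n ≤ wordLength S u := by
    intro n
    rcases n.eq_zero_or_pos with rfl | hpos
    · simp
    · rw [div_le_iff₀ (by exact_mod_cast hpos), mul_comm]
      exact_mod_cast wordLength_pow_le hS u n
  have hle := le_liminf_of_le (isCoboundedUnder_ge_of_le atTop hbdd) hev
  linarith [hu.2]

theorem IsDistortionElement.not_forall_mul_le_wordLength_pow (hS : Subgroup.closure S = ⊤)
    (hu : IsDistortionElement S u) {c A C : ℝ} (hc : 0 < c) :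
    ¬ ∀ n : ℕ, c * n ≤ A * wordLength S (u ^ n) + C := by
  intro h
  obtain ⟨n, hsmall, hlarge⟩ := ((hu.frequently_wordLength_pow_lt hS
    (ε := c / (2 * (|A| + 1))) (by positivity)).and_eventually
    (eventually_gt_atTop ⌈2 * C / c⌉₊)).exists
  have hn : 2 * C / c < n := Nat.lt_of_ceil_lt hlarge
  have hw : A * wordLength S (u ^ n) ≤ (|A| + 1) * wordLength S (u ^ n) := by
    gcongr; linarith [le_abs_self A]
  have hlt : (|A| + 1) * wordLength S (u ^ n) < c * n / 2 :=
    calc (|A| + 1) * wordLength S (u ^ n) < (|A| + 1) * (c / (2 * (|A| + 1)) * n) := by gcongr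
      _ = c * n / 2 := by field_simp
  rw [div_lt_iff₀ hc] at hn
  linarith [h n]

theorem IsDistortionElement.map_eq_one (hSfin : S.Finite) (hS : Subgroup.closure S = ⊤)
    (hu : IsDistortionElement S u)
    {H : Subgroup G} [H.FiniteIndex] (φ : H →* Multiplicative ℝ) {m : ℕ} (hm : u ^ m ∈ H) :
    φ ⟨u ^ m, hm⟩ = 1 := by
  by_contra hne
  have hc : 0 < |(φ ⟨u ^ m, hm⟩).toAdd| := abs_pos.mpr (toAdd_eq_zero.not.mpr hne)
  obtain ⟨M, C, hMC⟩ := exists_abs_toAdd_le_mul_wordLength_add hSfin hS H φ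
  refine hu.not_forall_mul_le_wordLength_pow hS hc (A := |M| * m) (C := C) fun n => ?_
  have hpow : ((⟨u ^ m, hm⟩ ^ n : H) : G) = (u ^ n) ^ m := by
    rw [SubgroupClass.coe_pow, ← pow_mul, ← pow_mul, mul_comm]
  have hlen : (wordLength S ((u ^ n) ^ m) : ℝ) ≤ m * wordLength S (u ^ n) := by
    exact_mod_cast wordLength_pow_le hS (u ^ n) m
  calc |(φ ⟨u ^ m, hm⟩).toAdd| * n = |(φ (⟨u ^ m, hm⟩ ^ n)).toAdd| := by
        rw [map_pow, toAdd_pow, nsmul_eq_mul, abs_mul, Nat.abs_cast, mul_comm]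
    _ ≤ M * wordLength S ((u ^ n) ^ m) + C := hpow ▸ hMC _
    _ ≤ |M| * wordLength S ((u ^ n) ^ m) + C := by gcongr; exact le_abs_self M
    _ ≤ |M| * m * wordLength S (u ^ n) + C := by rw [mul_assoc]; gcongr

end Distortion

/-- If `G` is a finitely generated almost simple group containing a distortion
element, and `H` is a normal subgroup of `G`, then every homomorphism from `H` to
the additive group `ℝ` is trivial. -/
theorem no_real_homomorphism_from_normal_subgroup {G : Type*} [Group G]
    (S : Set G) (hSfin : S.Finite) (hSgen : Subgroup.closure S = ⊤)
    (hAS : AlmostSimple G)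
    (u : G) (hdist : IsDistortionElement S u)
    (H : Subgroup G) (hH : H.Normal)
    (ψ : H →* Multiplicative ℝ) :
    ∀ h : H, ψ h = 1 := by
  suffices ψ.ker.FiniteIndex from ψ.eq_one_of_finiteIndex_ker
  rcases hAS H hH with hHfin | hHfi
  · have : Finite H := hHfin.to_subtype
    infer_instance
  set L := ψ.ker.map H.subtype
  have hum : u ^ H.index ∈ H := H.pow_index_mem u
  have hcore : u ^ H.index ∈ L.normalCore := fun g =>
    ⟨MulAut.conjNormal g ⟨_, hum⟩,
      hdist.map_eq_one hSfin hSgen (ψ.comp (MulAut.conjNormal (H := H) g).toMonoidHom) hum, rfl⟩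
  have : L.normalCore.FiniteIndex := by
    refine (hAS _ L.normalCore_normal).resolve_left fun hfin => hdist.1 ?_
    refine (finite_zpowers.mp (hfin.subset ?_)).of_pow hHfi.index_ne_zero
    exact Subgroup.zpowers_le.mpr hcore
  have : L.FiniteIndex := Subgroup.finiteIndex_of_le L.normalCore_le
  exact Subgroup.finiteIndex_of_map_subtype
end

section
/- Let F, G, H ∈ GL(2,ℝ) satisfy F = [G,H] = GHG⁻¹H⁻¹, and suppose F commutes with both G and H. Then F² = I. Moreover if F has two distinct eigenvalues then F = I. -/
open scoped commutatorElement

lemma neg_one_eigenvalue_aux (μ : ℂ) (h : Module.End.HasEigenvalue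
    (Matrix.toLin' ((-1 : Matrix (Fin 2) (Fin 2) ℝ).map (algebraMap ℝ ℂ))) μ) : μ = -1 := by
  obtain ⟨v, hv, hv0⟩ := h.exists_hasEigenvector
  have hm : ((-1 : Matrix (Fin 2) (Fin 2) ℝ).map (algebraMap ℝ ℂ)) = -1 := by
    ext i j; simp [Matrix.map_apply, Matrix.one_apply]; split <;> simp
  rw [Module.End.mem_eigenspace_iff, hm] at hv
  rw [map_neg, Matrix.toLin'_one] at hv
  have h2 : (μ + 1) • v = 0 := by
    rw [add_smul, one_smul, ← hv]; simp
  rcases smul_eq_zero.mp h2 with h3 | h3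
  · linear_combination h3
  · exact absurd h3 hv0

lemma aux_comm (F G H : Matrix (Fin 2) (Fin 2) ℝ)
    (hns : ¬(F 0 1 = 0 ∧ F 1 0 = 0 ∧ F 0 0 = F 1 1))
    (hG : F * G = G * F) (hH : F * H = H * F) : G * H = H * G := by
  set a := F 0 0 with ha; set b := F 0 1 with hb; set c := F 1 0 with hc; set d := F 1 1 with hd
  have eG1 : b * G 1 0 = G 0 1 * c := by
    have := congrFun (congrFun hG 0) 0
    simp only [Matrix.mul_apply, Fin.sum_univ_two] at this; linarith
  have eG2 : a * G 0 1 + b * G 1 1 = G 0 0 * b + G 0 1 * d := by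
    have := congrFun (congrFun hG 0) 1
    simpa [Matrix.mul_apply, Fin.sum_univ_two] using this
  have eG3 : c * G 0 0 + d * G 1 0 = G 1 0 * a + G 1 1 * c := by
    have := congrFun (congrFun hG 1) 0
    simpa [Matrix.mul_apply, Fin.sum_univ_two] using this
  have eH1 : b * H 1 0 = H 0 1 * c := by
    have := congrFun (congrFun hH 0) 0
    simp only [Matrix.mul_apply, Fin.sum_univ_two] at this; linarith
  have eH2 : a * H 0 1 + b * H 1 1 = H 0 0 * b + H 0 1 * d := by
    have := congrFun (congrFun hH 0) 1
    simpa [Matrix.mul_apply, Fin.sum_univ_two] using this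
  have eH3 : c * H 0 0 + d * H 1 0 = H 1 0 * a + H 1 1 * c := by
    have := congrFun (congrFun hH 1) 0
    simpa [Matrix.mul_apply, Fin.sum_univ_two] using this
  -- key scalar identities
  have k1 : G 0 1 * H 1 0 = H 0 1 * G 1 0 := by
    rcases eq_or_ne b 0 with hb0 | hb0
    · rcases eq_or_ne c 0 with hc0 | hc0
      · have had : a ≠ d := fun h => hns ⟨hb0, hc0, h⟩
        have g2 : G 0 1 = 0 := by
          have : G 0 1 * (a - d) = 0 := by rw [hb0] at eG2; linarith
          rcases mul_eq_zero.mp this with h | h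
          · exact h
          · exact absurd (by linarith) had
        have h2 : H 0 1 = 0 := by
          have : H 0 1 * (a - d) = 0 := by rw [hb0] at eH2; linarith
          rcases mul_eq_zero.mp this with h | h
          · exact h
          · exact absurd (by linarith) had
        rw [g2, h2]; ring
      · apply mul_left_cancel₀ hc0
        linear_combination G 1 0 * eH1 - H 1 0 * eG1
    · apply mul_left_cancel₀ hb0
      linear_combination G 0 1 * eH1 - H 0 1 * eG1
  have k2 : G 0 0 * H 0 1 + G 0 1 * H 1 1 = H 0 0 * G 0 1 + H 0 1 * G 1 1 := by
    rcases eq_or_ne b 0 with hb0 | hb0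
    · rcases eq_or_ne c 0 with hc0 | hc0
      · have had : a ≠ d := fun h => hns ⟨hb0, hc0, h⟩
        have g2 : G 0 1 = 0 := by
          have : G 0 1 * (a - d) = 0 := by rw [hb0] at eG2; linarith
          rcases mul_eq_zero.mp this with h | h
          · exact h
          · exact absurd (by linarith) had
        have h2 : H 0 1 = 0 := by
          have : H 0 1 * (a - d) = 0 := by rw [hb0] at eH2; linarith
          rcases mul_eq_zero.mp this with h | h
          · exact h
          · exact absurd (by linarith) had
        rw [g2, h2]; ring
      · -- use c: multiply by c. c * G01 = b * G10 = 0 since b = 0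
        have g2 : G 0 1 = 0 := by
          have : G 0 1 * c = 0 := by rw [hb0] at eG1; linarith
          rcases mul_eq_zero.mp this with h | h
          · exact h
          · exact absurd h hc0
        have h2 : H 0 1 = 0 := by
          have : H 0 1 * c = 0 := by rw [hb0] at eH1; linarith
          rcases mul_eq_zero.mp this with h | h
          · exact h
          · exact absurd h hc0
        rw [g2, h2]; ring
    · apply mul_left_cancel₀ hb0
      linear_combination G 0 1 * eH2 - H 0 1 * eG2
  have k3 : G 1 0 * H 0 0 + G 1 1 * H 1 0 = H 1 0 * G 0 0 + H 1 1 * G 1 0 := by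
    rcases eq_or_ne c 0 with hc0 | hc0
    · rcases eq_or_ne b 0 with hb0 | hb0
      · have had : a ≠ d := fun h => hns ⟨hb0, hc0, h⟩
        have g3 : G 1 0 = 0 := by
          have : G 1 0 * (a - d) = 0 := by rw [hc0] at eG3; linarith
          rcases mul_eq_zero.mp this with h | h
          · exact h
          · exact absurd (by linarith) had
        have h3 : H 1 0 = 0 := by
          have : H 1 0 * (a - d) = 0 := by rw [hc0] at eH3; linarith
          rcases mul_eq_zero.mp this with h | h
          · exact h
          · exact absurd (by linarith) had
        rw [g3, h3]; ring
      · have g3 : G 1 0 = 0 := by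
          have : b * G 1 0 = 0 := by rw [hc0] at eG1; linarith
          rcases mul_eq_zero.mp this with h | h
          · exact absurd h hb0
          · exact h
        have h3 : H 1 0 = 0 := by
          have : b * H 1 0 = 0 := by rw [hc0] at eH1; linarith
          rcases mul_eq_zero.mp this with h | h
          · exact absurd h hb0
          · exact h
        rw [g3, h3]; ring
    · apply mul_left_cancel₀ hc0
      linear_combination G 1 0 * eH3 - H 1 0 * eG3
  ext i j
  fin_cases i <;> fin_cases j <;>
    simp [Matrix.mul_apply, Fin.sum_univ_two] <;> linarith [k1, k2, k3]

/-- If `F = [G,H]` in `GL(2,ℝ)` and `F` commutes with both `G` and `H`, then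
`F² = I`; moreover if `F` has two distinct (complex) eigenvalues then `F = I`. -/
theorem commutator_commuting_with_factors_GL2
    (F G H : Matrix.GeneralLinearGroup (Fin 2) ℝ)
    (hF : F = ⁅G, H⁆) (hFG : Commute F G) (hFH : Commute F H) :
    F ^ 2 = 1 ∧
    ((∃ μ₁ μ₂ : ℂ, μ₁ ≠ μ₂ ∧
        Module.End.HasEigenvalue
          (Matrix.toLin' ((F : Matrix (Fin 2) (Fin 2) ℝ).map (algebraMap ℝ ℂ))) μ₁ ∧
        Module.End.HasEigenvalue
          (Matrix.toLin' ((F : Matrix (Fin 2) (Fin 2) ℝ).map (algebraMap ℝ ℂ))) μ₂) →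
      F = 1) := by
  have hFGm : (F : Matrix (Fin 2) (Fin 2) ℝ) * G = (G : Matrix (Fin 2) (Fin 2) ℝ) * F := by
    exact_mod_cast congrArg Units.val hFG
  have hFHm : (F : Matrix (Fin 2) (Fin 2) ℝ) * H = (H : Matrix (Fin 2) (Fin 2) ℝ) * F := by
    exact_mod_cast congrArg Units.val hFH
  by_cases hs : (F : Matrix (Fin 2) (Fin 2) ℝ) 0 1 = 0 ∧
      (F : Matrix (Fin 2) (Fin 2) ℝ) 1 0 = 0 ∧
      (F : Matrix (Fin 2) (Fin 2) ℝ) 0 0 = (F : Matrix (Fin 2) (Fin 2) ℝ) 1 1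
  · obtain ⟨h01, h10, hdiag⟩ := hs
    set a : ℝ := (F : Matrix (Fin 2) (Fin 2) ℝ) 0 0 with ha
    have hfeq : (F : Matrix (Fin 2) (Fin 2) ℝ) = a • 1 := by
      ext i j
      fin_cases i <;> fin_cases j <;>
        simp [Matrix.one_apply, h01, h10, ← hdiag, ha]
    have hdet : ((F : Matrix (Fin 2) (Fin 2) ℝ)).det = 1 := by
      have h : Matrix.GeneralLinearGroup.det F = 1 := by
        rw [hF, map_commutatorElement]
        exact commutatorElement_eq_one_iff_commute.mpr (mul_comm _ _)
      have := congrArg Units.val h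
      simpa using this
    have ha2 : a * a = 1 := by
      rw [hfeq] at hdet
      simpa [Matrix.det_smul, pow_two] using hdet
    constructor
    · apply Units.ext
      calc ((F ^ 2 : Matrix.GeneralLinearGroup (Fin 2) ℝ) : Matrix (Fin 2) (Fin 2) ℝ)
          = ((F : Matrix (Fin 2) (Fin 2) ℝ)) ^ 2 := by rw [Units.val_pow_eq_pow_val]
        _ = 1 := by rw [hfeq, smul_pow, one_pow, pow_two, ha2, one_smul]
    · rintro ⟨μ₁, μ₂, hne, he1, he2⟩
      rcases mul_self_eq_one_iff.mp ha2 with h1 | h1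
      · apply Units.ext
        rw [hfeq, h1, one_smul]; rfl
      · exfalso
        have hfm : (F : Matrix (Fin 2) (Fin 2) ℝ) = -1 := by
          rw [hfeq, h1]; simp
        rw [hfm] at he1 he2
        exact hne ((neg_one_eigenvalue_aux μ₁ he1).trans
          (neg_one_eigenvalue_aux μ₂ he2).symm)
  · have hGH : (G : Matrix (Fin 2) (Fin 2) ℝ) * H = (H : Matrix (Fin 2) (Fin 2) ℝ) * G :=
      aux_comm _ _ _ hs hFGm hFHm
    have hGHc : Commute G H := Units.ext (by exact_mod_cast hGH)
    have hF1 : F = 1 := by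
      rw [hF]; exact commutatorElement_eq_one_iff_commute.mpr hGHc
    exact ⟨by rw [hF1, one_pow], fun _ => hF1⟩
end
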